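/- arXiv:1307.0684 — 4 statements merged into one kernel-verified Lean document; each statement's English description precedes it below -/
import Mathlib

section
/- Let 𝓒 be a nonempty family of Borel probability measures on ℝ and define the maximal function F̄(x)=sup_{μ∈𝓒}F_μ(x). Let α∈(0,1) with α > lim_{x→-∞}F̄(x), and suppose there exists a∈ℝ with F̄(a)=α and that F̄ is strictly increasing on the set {x : lim_{y→-∞}F̄(y) < F̄(x) < 1}. Then inf_{μ∈𝓒} q_α(μ) = a. -/
open MeasureTheory Set Filter

/-- The distribution function of a measure: `F_μ(x) = μ((-∞, x])`. -/
noncomputable def distFun (μ : Measure ℝ) (x : ℝ) : ℝ := (μ (Iic x)).toReal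

/-- The lower quantile of order `α`: `q_α(μ) = inf {x : F_μ(x) ≥ α}`. -/
noncomputable def lowerQuantile (μ : Measure ℝ) (α : ℝ) : ℝ :=
  sInf {x : ℝ | α ≤ distFun μ x}

/-- Let `𝓒` be a nonempty family of Borel probability measures on ℝ with
maximal function `F̄(x) = sup_{μ ∈ 𝓒} F_μ(x)`. If `α ∈ (0,1)` exceeds the limit
`L` of `F̄` at `-∞`, `F̄(a) = α` for some `a`, and `F̄` is strictly increasing
on `{x : L < F̄(x) < 1}`, then `inf_{μ ∈ 𝓒} q_α(μ) = a`. -/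
theorem inf_quantile_eq_of_maximal_function
    (C : Set (Measure ℝ)) (hC : C.Nonempty)
    (hprob : ∀ μ ∈ C, IsProbabilityMeasure μ)
    (Fbar : ℝ → ℝ) (hFbar : ∀ x, Fbar x = sSup ((fun μ : Measure ℝ => distFun μ x) '' C))
    (L : ℝ) (hL : Tendsto Fbar atBot (nhds L))
    (α : ℝ) (hα : α ∈ Ioo (0 : ℝ) 1) (hαL : L < α)
    (a : ℝ) (ha : Fbar a = α)
    (hmono : StrictMonoOn Fbar {x | L < Fbar x ∧ Fbar x < 1}) :
    sInf ((fun μ : Measure ℝ => lowerQuantile μ α) '' C) = a := by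
  -- basic facts
  have hdle1 : ∀ μ ∈ C, ∀ x, distFun μ x ≤ 1 := by
    intro μ hμ x
    have := hprob μ hμ
    have h1 : μ (Iic x) ≤ 1 := prob_le_one
    simpa [distFun] using ENNReal.toReal_le_of_le_ofReal zero_le_one (by simpa using h1)
  have hdmono : ∀ μ ∈ C, Monotone (distFun μ) := by
    intro μ hμ x y hxy
    have := hprob μ hμ
    exact ENNReal.toReal_mono (measure_ne_top μ _) (measure_mono (Iic_subset_Iic.2 hxy))
  have hbdd : ∀ x, BddAbove ((fun μ : Measure ℝ => distFun μ x) '' C) := by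
    intro x
    exact ⟨1, by rintro _ ⟨μ, hμ, rfl⟩; exact hdle1 μ hμ x⟩
  have hdle : ∀ μ ∈ C, ∀ x, distFun μ x ≤ Fbar x := by
    intro μ hμ x
    rw [hFbar]
    exact le_csSup (hbdd x) ⟨μ, hμ, rfl⟩
  have hFle1 : ∀ x, Fbar x ≤ 1 := by
    intro x
    rw [hFbar]
    exact csSup_le (hC.image _) (by rintro _ ⟨μ, hμ, rfl⟩; exact hdle1 μ hμ x)
  have hFmono : Monotone Fbar := by
    intro x y hxy
    rw [hFbar x]
    refine csSup_le (hC.image _) ?_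
    rintro _ ⟨μ, hμ, rfl⟩
    exact le_trans (hdmono μ hμ hxy) (hdle μ hμ y)
  -- key 1: if α ≤ Fbar x then a ≤ x
  have key1 : ∀ x, α ≤ Fbar x → a ≤ x := by
    intro x hx
    by_contra h
    push_neg at h
    have h1 : Fbar x ≤ α := ha ▸ hFmono h.le
    have hxS : L < Fbar x ∧ Fbar x < 1 := ⟨lt_of_lt_of_le hαL hx, lt_of_le_of_lt h1 hα.2⟩
    have haS : L < Fbar a ∧ Fbar a < 1 := by rw [ha]; exact ⟨hαL, hα.2⟩
    have := hmono hxS haS h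
    rw [ha] at this
    linarith
  -- key 2: if a < x then α < Fbar x
  have key2 : ∀ x, a < x → α < Fbar x := by
    intro x hax
    rcases lt_or_ge (Fbar x) 1 with h1 | h1
    · have haS : L < Fbar a ∧ Fbar a < 1 := by rw [ha]; exact ⟨hαL, hα.2⟩
      have hxS : L < Fbar x ∧ Fbar x < 1 := ⟨by have := hFmono hax.le; rw [ha] at this; linarith, h1⟩
      have := hmono haS hxS hax
      rwa [ha] at this
    · exact lt_of_lt_of_le hα.2 h1
  -- quantile sets are nonempty and bounded below by a
  have hQne : ∀ μ ∈ C, {x : ℝ | α ≤ distFun μ x}.Nonempty := by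
    intro μ hμ
    haveI := hprob μ hμ
    have h1 : Tendsto (fun x => distFun μ x) atTop (nhds 1) := by
      have := tendsto_measure_Iic_atTop (μ := μ)
      have h2 : Tendsto (fun x => (μ (Iic x)).toReal) atTop (nhds (μ univ).toReal) :=
        (ENNReal.tendsto_toReal (measure_ne_top μ _)).comp this
      simpa [distFun, measure_univ] using h2
    exact (h1.eventually (eventually_ge_nhds hα.2)).exists
  have hQlb : ∀ μ ∈ C, ∀ y ∈ {x : ℝ | α ≤ distFun μ x}, a ≤ y := by
    intro μ hμ y hy
    exact key1 y (le_trans hy (hdle μ hμ y))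
  have hq_ge : ∀ μ ∈ C, a ≤ lowerQuantile μ α := by
    intro μ hμ
    exact le_csInf (hQne μ hμ) (hQlb μ hμ)
  -- conclude
  have himne : ((fun μ : Measure ℝ => lowerQuantile μ α) '' C).Nonempty := hC.image _
  have himbdd : BddBelow ((fun μ : Measure ℝ => lowerQuantile μ α) '' C) := by
    exact ⟨a, by rintro _ ⟨μ, hμ, rfl⟩; exact hq_ge μ hμ⟩
  refine le_antisymm ?_ (le_csInf himne (by rintro _ ⟨μ, hμ, rfl⟩; exact hq_ge μ hμ))
  refine le_of_forall_pos_le_add ?_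
  intro ε hε
  have h1 : α < Fbar (a + ε) := key2 _ (by linarith)
  rw [hFbar] at h1
  obtain ⟨_, ⟨μ, hμ, rfl⟩, h2⟩ := exists_lt_of_lt_csSup (hC.image _) h1
  have h3 : lowerQuantile μ α ≤ a + ε :=
    csInf_le ⟨a, hQlb μ hμ⟩ (le_of_lt h2)
  exact le_trans (csInf_le himbdd ⟨μ, hμ, rfl⟩) h3
end

section
/- Let 𝓒 be a nonempty family of Borel probability measures on ℝ and define the minimal function F_(x)=inf_{μ∈𝓒}F_μ(x). Let α∈(0,1) with α < lim_{x→+∞}F_(x), and suppose there exists a∈ℝ with F_(a)=α and that F_ is strictly increasing on the set {x : 0 < F_(x) < lim_{y→+∞}F_(y)}. Then sup_{μ∈𝓒} q_α(μ) = a. -/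
open MeasureTheory Set Filter

/-!
If `F_(a) = α`, every `μ ∈ 𝓒` has `F_μ(a) ≥ α`, so `q_α(μ) ≤ a`. Conversely, if all quantiles
are `< t` then `F_μ(t) ≥ α` for every `μ`, hence `α ≤ F_(t) ≤ F_(a) = α` when `t < a`; but then
`t` and `a` both lie in the level set `{0 < F_ < L}`, where `F_` is strictly increasing.
-/

lemma le_of_apply_le_of_strictMonoOn {β γ : Type*} [LinearOrder β] [PartialOrder γ]
    {f : β → γ} {s : Set γ} {a t : β} (hf : Monotone f) (hs : StrictMonoOn f (f ⁻¹' s))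
    (ha : f a ∈ s) (h : f a ≤ f t) : a ≤ t := by
  by_contra! hta
  have hfeq : f t = f a := le_antisymm (hf hta.le) h
  exact (hs (by rwa [mem_preimage, hfeq]) ha hta).ne hfeq

section Quantile

variable {μ : Measure ℝ} [IsProbabilityMeasure μ] {α t : ℝ}

lemma distFun_eq_cdf : distFun μ = ProbabilityTheory.cdf μ := by
  ext x
  rw [ProbabilityTheory.cdf_eq_real, measureReal_def, distFun]

lemma monotone_distFun : Monotone (distFun μ) :=
  distFun_eq_cdf (μ := μ) ▸ ProbabilityTheory.monotone_cdf μ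

lemma bddBelow_setOf_le_distFun (hα : 0 < α) : BddBelow {x | α ≤ distFun μ x} := by
  have h_bot : Tendsto (distFun μ) atBot (nhds 0) :=
    distFun_eq_cdf (μ := μ) ▸ ProbabilityTheory.tendsto_cdf_atBot μ
  obtain ⟨x₀, hx₀⟩ := (h_bot.eventually_lt_const hα).exists
  refine ⟨x₀, fun y hy => ?_⟩
  by_contra! hyx
  exact (hy.trans (monotone_distFun hyx.le)).not_gt hx₀

lemma lowerQuantile_le (hα : 0 < α) (ht : α ≤ distFun μ t) : lowerQuantile μ α ≤ t :=
  csInf_le (bddBelow_setOf_le_distFun hα) ht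

lemma le_distFun_of_lowerQuantile_lt (hα : 0 < α) (hne : ∃ x, α ≤ distFun μ x)
    (ht : lowerQuantile μ α < t) : α ≤ distFun μ t := by
  obtain ⟨x, hx, hxt⟩ := (csInf_lt_iff (bddBelow_setOf_le_distFun hα) hne).1 ht
  exact hx.trans (monotone_distFun hxt.le)

end Quantile

section MinDistFun

noncomputable def minDistFun (C : Set (Measure ℝ)) (x : ℝ) : ℝ :=
  sInf ((fun μ : Measure ℝ => distFun μ x) '' C)

variable {C : Set (Measure ℝ)} {μ : Measure ℝ} {α c t x : ℝ}

lemma minDistFun_le (hμ : μ ∈ C) : minDistFun C x ≤ distFun μ x :=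
  csInf_le ⟨0, forall_mem_image.2 fun _ _ => ENNReal.toReal_nonneg⟩ ⟨μ, hμ, rfl⟩

lemma le_minDistFun (hC : C.Nonempty) (h : ∀ μ ∈ C, c ≤ distFun μ x) : c ≤ minDistFun C x :=
  le_csInf (hC.image _) (forall_mem_image.2 h)

lemma monotone_minDistFun (hC : C.Nonempty) (hprob : ∀ μ ∈ C, IsProbabilityMeasure μ) :
    Monotone (minDistFun C) := fun _ _ hxy =>
  le_minDistFun hC fun μ hμ =>
    have := hprob μ hμ
    (minDistFun_le hμ).trans (monotone_distFun hxy)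

lemma le_minDistFun_of_forall_lowerQuantile_lt (hC : C.Nonempty)
    (hprob : ∀ μ ∈ C, IsProbabilityMeasure μ) (hα : 0 < α) (hne : ∃ x, α ≤ minDistFun C x)
    (ht : ∀ μ ∈ C, lowerQuantile μ α < t) : α ≤ minDistFun C t :=
  le_minDistFun hC fun μ hμ =>
    have := hprob μ hμ
    le_distFun_of_lowerQuantile_lt hα (hne.imp fun _ hx => hx.trans (minDistFun_le hμ)) (ht μ hμ)

end MinDistFun

/-- Let `𝓒` be a nonempty family of Borel probability measures on ℝ with
minimal function `F_(x) = inf_{μ ∈ 𝓒} F_μ(x)`. If `α ∈ (0,1)` is below the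
limit `L` of `F_` at `+∞`, `F_(a) = α` for some `a`, and `F_` is strictly
increasing on `{x : 0 < F_(x) < L}`, then `sup_{μ ∈ 𝓒} q_α(μ) = a`. -/
theorem sup_quantile_eq_of_minimal_function
    (C : Set (Measure ℝ)) (hC : C.Nonempty)
    (hprob : ∀ μ ∈ C, IsProbabilityMeasure μ)
    (Fund : ℝ → ℝ) (hFund : ∀ x, Fund x = sInf ((fun μ : Measure ℝ => distFun μ x) '' C))
    (L : ℝ) (hL : Tendsto Fund atTop (nhds L))
    (α : ℝ) (hα : α ∈ Ioo (0 : ℝ) 1) (hαL : α < L)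
    (a : ℝ) (ha : Fund a = α)
    (hmono : StrictMonoOn Fund {x | 0 < Fund x ∧ Fund x < L}) :
    sSup ((fun μ : Measure ℝ => lowerQuantile μ α) '' C) = a := by
  obtain rfl : Fund = minDistFun C := funext hFund
  have hq_le : ∀ μ ∈ C, lowerQuantile μ α ≤ a := fun μ hμ =>
    have := hprob μ hμ
    lowerQuantile_le hα.1 (ha ▸ minDistFun_le hμ)
  have hQbdd : BddAbove ((fun μ : Measure ℝ => lowerQuantile μ α) '' C) :=
    ⟨a, forall_mem_image.2 hq_le⟩
  refine le_antisymm (csSup_le (hC.image _) (forall_mem_image.2 hq_le))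
    (le_of_forall_gt_imp_ge_of_dense fun t hst => ?_)
  have hαt : α ≤ minDistFun C t :=
    le_minDistFun_of_forall_lowerQuantile_lt hC hprob hα.1
      ((hL.eventually_const_lt hαL).exists.imp fun _ => le_of_lt)
      fun μ hμ => (le_csSup hQbdd ⟨μ, hμ, rfl⟩).trans_lt hst
  exact le_of_apply_le_of_strictMonoOn (s := Ioo 0 L) (monotone_minDistFun hC hprob) hmono
    ⟨ha ▸ hα.1, ha ▸ hαL⟩ (ha.trans_le hαt)
end

section
/- Let 𝓛₀₁ be the set of all Borel probability measures on ℝ with mean 0 and variance 1, and let α∈(0,1). Then inf_{μ∈𝓛₀₁} q_α(μ) = -√((1-α)/α) and sup_{μ∈𝓛₀₁} q_α(μ) = √(α/(1-α)). -/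
/-!
For a law of mean `0` and variance `1`, Markov's inequality applied to `(t X ∓ 1)²`
(Cantelli's one-sided Chebyshev inequality) gives `F(-t) ≤ 1 / (1 + t²)` and
`F(t) ≥ t² / (1 + t²)` for `t > 0`. Writing `α = b² / (1 + b²)`, so that
`√((1 - α) / α) = b⁻¹` and `√(α / (1 - α)) = b`, this confines every `α`-quantile to
`[-b⁻¹, b]`. The law with mass `α` at `-b⁻¹` and `1 - α` at `b` has `α`-quantile `-b⁻¹`; the
analogous laws on `{-t⁻¹, t}` with `t < b` have `α`-quantile `t`, so the upper end is a
supremum that is not attained.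
-/

open MeasureTheory Set

/-- The set of all Borel probability measures on ℝ with mean 0 and variance 1. -/
def stdMeasures : Set (Measure ℝ) :=
  {μ | IsProbabilityMeasure μ ∧ (∫ x, x ∂μ) = 0 ∧ (∫ x, x ^ 2 ∂μ) = 1}

section Moments

variable {μ : Measure ℝ}

lemma integrable_sq_of_mem_stdMeasures (hμ : μ ∈ stdMeasures) :
    Integrable (fun x : ℝ => x ^ 2) μ :=
  Integrable.of_integral_ne_zero (by rw [hμ.2.2]; exact one_ne_zero)

lemma integrable_id_of_mem_stdMeasures (hμ : μ ∈ stdMeasures) :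
    Integrable (fun x : ℝ => x) μ :=
  have := hμ.1
  ((memLp_two_iff_integrable_sq aestronglyMeasurable_id).2
    (integrable_sq_of_mem_stdMeasures hμ)).integrable one_le_two

lemma integrable_affine_sq_of_mem_stdMeasures (hμ : μ ∈ stdMeasures) (a b : ℝ) :
    Integrable (fun x : ℝ => (a * x + b) ^ 2) μ := by
  have := hμ.1
  have h := (((integrable_sq_of_mem_stdMeasures hμ).const_mul (a ^ 2)).fun_add
    ((integrable_id_of_mem_stdMeasures hμ).const_mul (2 * a * b))).fun_add
      (integrable_const (b ^ 2))
  exact h.congr (ae_of_all _ fun x => by ring)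

lemma integral_affine_sq_of_mem_stdMeasures (hμ : μ ∈ stdMeasures) (a b : ℝ) :
    ∫ x, (a * x + b) ^ 2 ∂μ = a ^ 2 + b ^ 2 := by
  have := hμ.1
  have hsq := (integrable_sq_of_mem_stdMeasures hμ).const_mul (a ^ 2)
  have hid := (integrable_id_of_mem_stdMeasures hμ).const_mul (2 * a * b)
  calc ∫ x, (a * x + b) ^ 2 ∂μ = ∫ x, (a ^ 2 * x ^ 2 + 2 * a * b * x + b ^ 2) ∂μ := by
        congr 1; ext x; ring
    _ = a ^ 2 + b ^ 2 := by
        rw [integral_add (hsq.fun_add hid) (integrable_const _), integral_add hsq hid,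
          integral_const_mul, integral_const_mul, hμ.2.1, hμ.2.2]
        simp

lemma mul_measureReal_le_of_le_affine_sq (hμ : μ ∈ stdMeasures) {a b r : ℝ} {s : Set ℝ}
    (hs : ∀ x ∈ s, r ≤ (a * x + b) ^ 2) : r * μ.real s ≤ a ^ 2 + b ^ 2 := by
  have := hμ.1
  rcases le_or_gt r 0 with hr | hr
  · nlinarith [measureReal_nonneg (μ := μ) (s := s), sq_nonneg a, sq_nonneg b]
  calc r * μ.real s ≤ r * μ.real {x | r ≤ (a * x + b) ^ 2} :=
        mul_le_mul_of_nonneg_left (measureReal_mono hs) hr.le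
    _ ≤ ∫ x, (a * x + b) ^ 2 ∂μ :=
        mul_meas_ge_le_integral_of_nonneg (ae_of_all _ fun _ => sq_nonneg _)
          (integrable_affine_sq_of_mem_stdMeasures hμ a b) r
    _ = a ^ 2 + b ^ 2 := integral_affine_sq_of_mem_stdMeasures hμ a b

lemma distFun_neg_le_of_mem_stdMeasures (hμ : μ ∈ stdMeasures) {t : ℝ} (ht : 0 < t) :
    distFun μ (-t) ≤ 1 / (1 + t ^ 2) := by
  have h := mul_measureReal_le_of_le_affine_sq (a := t) (b := -1) (r := (1 + t ^ 2) ^ 2)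
    (s := Iic (-t)) hμ fun x (hx : x ≤ -t) => by nlinarith [mul_le_mul_of_nonneg_left hx ht.le]
  rw [le_div_iff₀ (by positivity)]
  change (1 + t ^ 2) ^ 2 * distFun μ (-t) ≤ _ at h
  nlinarith [show (0 : ℝ) < 1 + t ^ 2 by positivity]

lemma sq_div_le_distFun_of_mem_stdMeasures (hμ : μ ∈ stdMeasures) {t : ℝ} (ht : 0 < t) :
    t ^ 2 / (1 + t ^ 2) ≤ distFun μ t := by
  have := hμ.1
  have h := mul_measureReal_le_of_le_affine_sq (a := t) (b := 1) (r := (1 + t ^ 2) ^ 2)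
    (s := Ioi t) hμ fun x (hx : t < x) => by nlinarith [mul_lt_mul_of_pos_left hx ht]
  rw [← compl_Iic, measureReal_compl measurableSet_Iic, probReal_univ] at h
  change _ * (1 - distFun μ t) ≤ _ at h
  rw [div_le_iff₀ (by positivity)]
  nlinarith [show (0 : ℝ) < 1 + t ^ 2 by positivity]

end Moments

section Quantile

variable {μ : Measure ℝ} {α q : ℝ}

lemma lowerQuantile_eq_of_le_distFun (hq : α ≤ distFun μ q) (hlt : ∀ x < q, distFun μ x < α) :
    lowerQuantile μ α = q :=
  IsLeast.csInf_eq ⟨hq, fun x hx => not_lt.1 fun hxq => (hlt x hxq).not_ge hx⟩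

lemma lowerQuantile_mem_Icc_of_mem_stdMeasures (hμ : μ ∈ stdMeasures) {b : ℝ} (hb : 0 < b) :
    lowerQuantile μ (b ^ 2 / (1 + b ^ 2)) ∈ Icc (-b⁻¹) b := by
  have hb_mem : b ∈ {x | b ^ 2 / (1 + b ^ 2) ≤ distFun μ x} :=
    sq_div_le_distFun_of_mem_stdMeasures hμ hb
  have hlower : -b⁻¹ ∈ lowerBounds {x | b ^ 2 / (1 + b ^ 2) ≤ distFun μ x} := by
    intro x hx
    by_contra! hxb
    have ht : b⁻¹ < -x := by linarith
    have hbt : 1 < b * -x := by rwa [inv_lt_iff_one_lt_mul₀' hb] at ht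
    have hF := distFun_neg_le_of_mem_stdMeasures hμ ((inv_pos.2 hb).trans ht)
    rw [neg_neg] at hF
    have : 1 / (1 + (-x) ^ 2) < b ^ 2 / (1 + b ^ 2) := by
      rw [div_lt_div_iff₀ (by positivity) (by positivity)]
      nlinarith
    exact (hx.trans hF).not_gt this
  exact ⟨le_csInf ⟨b, hb_mem⟩ hlower, csInf_le ⟨-b⁻¹, hlower⟩ hb_mem⟩

end Quantile

noncomputable def twoPoint (b : ℝ) : Measure ℝ :=
  ENNReal.ofReal (b ^ 2 / (1 + b ^ 2)) • Measure.dirac (-b⁻¹) +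
    ENNReal.ofReal (1 / (1 + b ^ 2)) • Measure.dirac b

section TwoPoint

variable {b : ℝ}

lemma integral_twoPoint (f : ℝ → ℝ) :
    ∫ x, f x ∂twoPoint b = b ^ 2 / (1 + b ^ 2) * f (-b⁻¹) + 1 / (1 + b ^ 2) * f b := by
  rw [twoPoint, integral_add_measure ((integrable_dirac (by simp)).smul_measure (by simp))
    ((integrable_dirac (by simp)).smul_measure (by simp)), integral_smul_measure,
    integral_smul_measure, integral_dirac, integral_dirac, ENNReal.toReal_ofReal (by positivity),
    ENNReal.toReal_ofReal (by positivity), smul_eq_mul, smul_eq_mul]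

lemma twoPoint_mem_stdMeasures (hb : 0 < b) : twoPoint b ∈ stdMeasures := by
  have hb0 : b ≠ 0 := hb.ne'
  refine ⟨⟨?_⟩, ?_, ?_⟩
  · simp only [twoPoint, Measure.add_apply, Measure.smul_apply, measure_univ, smul_eq_mul, mul_one]
    rw [← ENNReal.ofReal_add (by positivity) (by positivity), ← ENNReal.ofReal_one]
    congr 1
    field_simp
    ring
  · rw [integral_twoPoint]
    field_simp
    ring
  · rw [integral_twoPoint]
    field_simp

lemma distFun_twoPoint (x : ℝ) :
    distFun (twoPoint b) x = b ^ 2 / (1 + b ^ 2) * (Iic x).indicator 1 (-b⁻¹) +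
      1 / (1 + b ^ 2) * (Iic x).indicator 1 b := by
  rw [distFun, ← Measure.real_def, ← integral_indicator_one measurableSet_Iic, integral_twoPoint]

lemma lowerQuantile_twoPoint (hb : 0 < b) :
    lowerQuantile (twoPoint b) (b ^ 2 / (1 + b ^ 2)) = -b⁻¹ := by
  have hb' : -b⁻¹ < b := (neg_neg_of_pos (inv_pos.2 hb)).trans hb
  apply lowerQuantile_eq_of_le_distFun
  · rw [distFun_twoPoint, indicator_of_mem (mem_Iic.2 le_rfl)]
    have : 0 ≤ (Iic (-b⁻¹)).indicator (1 : ℝ → ℝ) b := indicator_nonneg (fun _ _ => zero_le_one) b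
    simp only [Pi.one_apply, mul_one]
    nlinarith [show (0 : ℝ) < 1 / (1 + b ^ 2) by positivity]
  · intro x hx
    rw [distFun_twoPoint, indicator_of_notMem (notMem_Iic.2 hx),
      indicator_of_notMem (notMem_Iic.2 (hx.trans hb'))]
    simp only [mul_zero, add_zero]
    positivity

lemma lowerQuantile_twoPoint_of_lt {t : ℝ} (ht : 0 < t) (htb : t < b) :
    lowerQuantile (twoPoint t) (b ^ 2 / (1 + b ^ 2)) = t := by
  have ht' : -t⁻¹ < t := (neg_neg_of_pos (inv_pos.2 ht)).trans ht
  apply lowerQuantile_eq_of_le_distFun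
  · rw [distFun_twoPoint, indicator_of_mem (mem_Iic.2 ht'.le), indicator_of_mem (mem_Iic.2 le_rfl)]
    have hsum : t ^ 2 / (1 + t ^ 2) + 1 / (1 + t ^ 2) = 1 := by field_simp; ring
    simp only [Pi.one_apply, mul_one, hsum]
    exact (div_lt_one (by positivity)).2 (lt_one_add _) |>.le
  · intro x hx
    rw [distFun_twoPoint, indicator_of_notMem (notMem_Iic.2 hx)]
    have : (Iic x).indicator (1 : ℝ → ℝ) (-t⁻¹) ≤ 1 := indicator_le_self' (fun _ _ => zero_le_one) _
    have hlt : t ^ 2 / (1 + t ^ 2) < b ^ 2 / (1 + b ^ 2) := by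
      rw [div_lt_div_iff₀ (by positivity) (by positivity)]
      nlinarith
    nlinarith [show (0 : ℝ) ≤ t ^ 2 / (1 + t ^ 2) by positivity]

end TwoPoint

section Extremal

variable {b : ℝ}

lemma isLeast_lowerQuantile_image (hb : 0 < b) :
    IsLeast ((fun μ : Measure ℝ => lowerQuantile μ (b ^ 2 / (1 + b ^ 2))) '' stdMeasures) (-b⁻¹) :=
  ⟨⟨twoPoint b, twoPoint_mem_stdMeasures hb, lowerQuantile_twoPoint hb⟩, by
    rintro _ ⟨μ, hμ, rfl⟩
    exact (lowerQuantile_mem_Icc_of_mem_stdMeasures hμ hb).1⟩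

lemma isLUB_lowerQuantile_image (hb : 0 < b) :
    IsLUB ((fun μ : Measure ℝ => lowerQuantile μ (b ^ 2 / (1 + b ^ 2))) '' stdMeasures) b := by
  refine (isLUB_Ioo hb).of_subset_of_superset isLUB_Iic ?_ ?_
  · rintro t ⟨ht, htb⟩
    exact ⟨twoPoint t, twoPoint_mem_stdMeasures ht, lowerQuantile_twoPoint_of_lt ht htb⟩
  · rintro _ ⟨μ, hμ, rfl⟩
    exact (lowerQuantile_mem_Icc_of_mem_stdMeasures hμ hb).2

end Extremal

/-- The extremal quantiles over the class of standard probability measures: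
`inf_μ q_α(μ) = -√((1-α)/α)` and `sup_μ q_α(μ) = √(α/(1-α))`. -/
theorem extremal_quantiles_std (α : ℝ) (hα : α ∈ Ioo (0 : ℝ) 1) :
    sInf ((fun μ : Measure ℝ => lowerQuantile μ α) '' stdMeasures) =
      -Real.sqrt ((1 - α) / α) ∧
    sSup ((fun μ : Measure ℝ => lowerQuantile μ α) '' stdMeasures) =
      Real.sqrt (α / (1 - α)) := by
  obtain ⟨hα0, hα1⟩ := hα
  have hpos : 0 < α / (1 - α) := div_pos hα0 (sub_pos.2 hα1)
  set b := Real.sqrt (α / (1 - α)) with hb_def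
  have hb : 0 < b := Real.sqrt_pos.2 hpos
  have hinv : Real.sqrt ((1 - α) / α) = b⁻¹ := by rw [hb_def, ← Real.sqrt_inv, inv_div]
  have hα_eq : α = b ^ 2 / (1 + b ^ 2) := by
    rw [hb_def, Real.sq_sqrt hpos.le]
    field_simp [(sub_pos.2 hα1).ne']
    ring
  rw [hinv, hα_eq]
  have hleast := isLeast_lowerQuantile_image hb
  exact ⟨hleast.csInf_eq, (isLUB_lowerQuantile_image hb).csSup_eq hleast.nonempty⟩
end

section
/- Let μ* be the Borel probability measure on ℝ with distribution function F(x) = (1/2)·(1 + x/√(x²+1)). Then for every α∈(0,1), ES_α(μ*) = √((1-α)/α). -/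
open MeasureTheory Set

/-- The Value-at-Risk of order `α`: `VaR_α(μ) = -q_α(μ)`. -/
noncomputable def VaR (μ : Measure ℝ) (α : ℝ) : ℝ := - lowerQuantile μ α

/-- The Expected Shortfall of order `α`: `ES_α(μ) = (1/α) ∫₀^α VaR_u(μ) du`. -/
noncomputable def ES (μ : Measure ℝ) (α : ℝ) : ℝ :=
  (1 / α) * ∫ u in (0 : ℝ)..α, VaR μ u

/-! Since `x / √(x² + 1) = sin (arctan x)`, the distribution function
`F = (1 + sin ∘ arctan) / 2` is a strictly increasing bijection onto `(0, 1)`, so the lower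
quantile is its inverse `u ↦ tan (arcsin (2u - 1)) = (2u - 1) / (2√(u(1 - u)))`. The VaR
`(1 - 2u) / (2√(u(1 - u)))` is the derivative of `√(u(1 - u))` and, near `0`, a continuous
multiple of the integrable `u ^ (-1/2)`; so `∫₀^α VaR_u du = √(α(1 - α))`, and dividing by `α`
gives `√((1 - α) / α)`. -/

open Real

theorem lowerQuantile_distFun_of_strictMono {μ : Measure ℝ} (hF : StrictMono (distFun μ))
    (q : ℝ) : lowerQuantile μ (distFun μ q) = q := by
  have hsuper : {x | distFun μ q ≤ distFun μ x} = Ici q := by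
    ext x
    exact hF.le_iff_le
  rw [lowerQuantile, hsuper, csInf_Ici]

theorem distFun_eq_sin_arctan {μ : Measure ℝ}
    (hF : ∀ x : ℝ, distFun μ x = (1 / 2) * (1 + x / √(x ^ 2 + 1))) :
    distFun μ = fun x => (1 + sin (arctan x)) / 2 := by
  ext x
  rw [hF, sin_arctan, add_comm (x ^ 2)]
  ring

section SinArctan

variable {μ : Measure ℝ}

theorem strictMono_distFun (hF : distFun μ = fun x => (1 + sin (arctan x)) / 2) :
    StrictMono (distFun μ) := by
  rw [hF]
  exact fun x y hxy => by linarith [sin_arctan_strictMono hxy]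

theorem distFun_tan_arcsin (hF : distFun μ = fun x => (1 + sin (arctan x)) / 2) {u : ℝ}
    (hu : u ∈ Ioo (0 : ℝ) 1) : distFun μ (tan (arcsin (2 * u - 1))) = u := by
  obtain ⟨hu0, hu1⟩ := hu
  simp only [hF]
  rw [arctan_tan (neg_pi_div_two_lt_arcsin.2 (by linarith))
      (arcsin_lt_pi_div_two.2 (by linarith)), sin_arcsin (by linarith) (by linarith)]
  ring

theorem VaR_eq_one_sub_two_mul_div_sqrt (hF : distFun μ = fun x => (1 + sin (arctan x)) / 2)
    {u : ℝ} (hu : u ∈ Ioo (0 : ℝ) 1) : VaR μ u = (1 - 2 * u) / (2 * √(u * (1 - u))) := by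
  have hq :=
    lowerQuantile_distFun_of_strictMono (strictMono_distFun hF) (tan (arcsin (2 * u - 1)))
  rw [distFun_tan_arcsin hF hu] at hq
  have hsqrt : √(1 - (2 * u - 1) ^ 2) = 2 * √(u * (1 - u)) := by
    rw [show 1 - (2 * u - 1) ^ 2 = 2 ^ 2 * (u * (1 - u)) by ring, sqrt_mul (by positivity),
      sqrt_sq zero_le_two]
  rw [VaR, hq, tan_arcsin, hsqrt]
  ring

end SinArctan

theorem hasDerivAt_sqrt_mul_one_sub {u : ℝ} (hu : u ∈ Ioo (0 : ℝ) 1) :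
    HasDerivAt (fun u => √(u * (1 - u))) ((1 - 2 * u) / (2 * √(u * (1 - u)))) u := by
  have hpoly : HasDerivAt (fun u : ℝ => u * (1 - u)) (1 - 2 * u) u :=
    ((hasDerivAt_id' u).mul ((hasDerivAt_id' u).const_sub 1)).congr_deriv (by ring)
  exact hpoly.sqrt (mul_pos hu.1 (sub_pos.2 hu.2)).ne'

theorem intervalIntegrable_one_sub_two_mul_div_sqrt {α : ℝ} (hα0 : 0 ≤ α) (hα1 : α < 1) :
    IntervalIntegrable (fun u => (1 - 2 * u) / (2 * √(u * (1 - u)))) volume 0 α := by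
  rw [intervalIntegrable_iff_integrableOn_Ioc_of_le hα0]
  have hrpow : IntegrableOn (fun u : ℝ => u ^ (-(1 / 2) : ℝ)) (Ioc 0 α) := by
    rw [← intervalIntegrable_iff_integrableOn_Ioc_of_le hα0]
    exact intervalIntegral.intervalIntegrable_rpow' (by norm_num)
  have hcont : ContinuousOn (fun u : ℝ => (1 - 2 * u) / (2 * √(1 - u))) (Icc 0 α) := by
    refine ContinuousOn.div (by fun_prop) (by fun_prop) fun u hu => ?_
    have : 0 < √(1 - u) := sqrt_pos.2 (by linarith [hu.2])
    positivity
  refine (IntegrableOn.continuousOn_mul_of_subset hcont hrpow isCompact_Icc measurableSet_Ioc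
    Ioc_subset_Icc_self).congr_fun (fun u hu => ?_) measurableSet_Ioc
  beta_reduce
  rw [rpow_neg hu.1.le, ← sqrt_eq_rpow, sqrt_mul hu.1.le]
  ring

theorem integral_one_sub_two_mul_div_sqrt {α : ℝ} (hα0 : 0 ≤ α) (hα1 : α < 1) :
    ∫ u in (0 : ℝ)..α, (1 - 2 * u) / (2 * √(u * (1 - u))) = √(α * (1 - α)) := by
  rw [intervalIntegral.integral_eq_sub_of_hasDerivAt_of_le hα0 (by fun_prop)
    (fun u hu => hasDerivAt_sqrt_mul_one_sub ⟨hu.1, hu.2.trans hα1⟩)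
    (intervalIntegrable_one_sub_two_mul_div_sqrt hα0 hα1)]
  simp

theorem expected_shortfall_maximal_stop_loss_measure_general
    (μs : Measure ℝ)
    (hF : ∀ x : ℝ, distFun μs x = (1 / 2) * (1 + x / Real.sqrt (x ^ 2 + 1)))
    (α : ℝ) (hα : α ∈ Ioo (0 : ℝ) 1) :
    ES μs α = Real.sqrt ((1 - α) / α) := by
  obtain ⟨hα0, hα1⟩ := hα
  have hVaR : ∫ u in (0 : ℝ)..α, VaR μs u =
      ∫ u in (0 : ℝ)..α, (1 - 2 * u) / (2 * √(u * (1 - u))) :=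
    intervalIntegral.integral_congr_ae (ae_of_all _ fun u hu => by
      rw [uIoc_of_le hα0.le] at hu
      exact VaR_eq_one_sub_two_mul_div_sqrt (distFun_eq_sin_arctan hF)
        ⟨hu.1, hu.2.trans_lt hα1⟩)
  rw [ES, hVaR, integral_one_sub_two_mul_div_sqrt hα0.le hα1,
    show (1 - α) / α = α * (1 - α) / α ^ 2 by field_simp, sqrt_div' _ (sq_nonneg α),
    sqrt_sq hα0.le]
  ring

/-- If `μ*` is the Borel probability measure on ℝ with distribution function
`F(x) = (1/2)(1 + x/√(x²+1))`, then `ES_α(μ*) = √((1-α)/α)` for every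
`α ∈ (0,1)`. -/
theorem expected_shortfall_maximal_stop_loss_measure
    (μs : Measure ℝ) [IsProbabilityMeasure μs]
    (hF : ∀ x : ℝ, distFun μs x = (1 / 2) * (1 + x / Real.sqrt (x ^ 2 + 1)))
    (α : ℝ) (hα : α ∈ Ioo (0 : ℝ) 1) :
    ES μs α = Real.sqrt ((1 - α) / α) :=
  expected_shortfall_maximal_stop_loss_measure_general μs hF α hα
end
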